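/- arXiv:1312.3072 — 2 statements merged into one kernel-verified Lean document; each statement's English description precedes it below -/
import Mathlib

section
/- Every graph H is isomorphic to an induced subgraph of the Gallai graph of some graph G. Specifically, if G is the graph with vertex set V(H) ∪ {x} where x is adjacent to all vertices of V(H) and G − x is the complement of H, then the subgraph of Γ(G) induced by the edges of G incident with x is isomorphic to H. -/
open SimpleGraph

/-- The Gallai graph of `G`: vertices are the edges of `G`; two distinct edges are
adjacent iff they share an endpoint but do not span a triangle in `G`. -/
def SimpleGraph.gallai {V : Type*} (G : SimpleGraph V) : SimpleGraph G.edgeSet where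
  Adj e f := e ≠ f ∧ ∃ a b c : V, (e : Sym2 V) = s(a, b) ∧ (f : Sym2 V) = s(a, c) ∧ ¬ G.Adj b c
  symm := by
    constructor
    rintro e f ⟨hne, a, b, c, he, hf, h⟩
    exact ⟨hne.symm, a, c, b, hf, he, fun h' => h h'.symm⟩
  loopless := ⟨fun e h => h.1 rfl⟩

/-- The line graph of `G`: vertices are the edges of `G`; two distinct edges are
adjacent iff they share an endpoint. -/
def SimpleGraph.lineGraph' {V : Type*} (G : SimpleGraph V) : SimpleGraph G.edgeSet where
  Adj e f := e ≠ f ∧ ∃ a : V, a ∈ (e : Sym2 V) ∧ a ∈ (f : Sym2 V)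
  symm := by constructor; rintro e f ⟨hne, a, h1, h2⟩; exact ⟨hne.symm, a, h2, h1⟩
  loopless := ⟨fun e h => h.1 rfl⟩

/-- `G` contains an induced copy of `H`. -/
def HasInducedCopy {α V : Type*} (H : SimpleGraph α) (G : SimpleGraph V) : Prop :=
  ∃ f : α ↪ V, ∀ a b : α, H.Adj a b ↔ G.Adj (f a) (f b)

/-- A graph is chordal if it has no induced cycle of length at least 4. -/
def SimpleGraph.Chordal {V : Type*} (G : SimpleGraph V) : Prop :=
  ∀ n : ℕ, 4 ≤ n → ¬ HasInducedCopy (SimpleGraph.cycleGraph n) G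

/-- The graph on `Fin n` with the given list of edges. -/
def graphOfList (n : ℕ) (l : List (Fin n × Fin n)) : SimpleGraph (Fin n) :=
  SimpleGraph.fromRel (fun i j => (i, j) ∈ l)

/-- `F₁`, the claw `K_{1,3}`. -/
def F1 : SimpleGraph (Fin 4) := graphOfList 4 [(0,3),(1,3),(2,3)]

/-- `F₂`, the bowtie: two triangles sharing one vertex. -/
def F2 : SimpleGraph (Fin 5) := graphOfList 5 [(0,1),(0,4),(1,4),(2,3),(2,4),(3,4)]

/-- `F₃`, the octahedron `K_{2,2,2}`. -/
def F3 : SimpleGraph (Fin 6) := SimpleGraph.fromRel (fun i j => (i.val + 3) % 6 ≠ j.val)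

/-- `F₄`: a path `0-1-2-3`, a vertex `4` adjacent to `1,2`, and a pendant `5` adjacent to `4`. -/
def F4 : SimpleGraph (Fin 6) := graphOfList 6 [(0,1),(1,2),(2,3),(1,4),(2,4),(4,5)]

/-- `F₅`: the gem on `{0,1,2,3,4}` (path `0-3-4-2` dominated by `1`) plus vertex `5`
adjacent to the two top vertices `3,4`. -/
def F5 : SimpleGraph (Fin 6) :=
  graphOfList 6 [(0,1),(1,2),(2,4),(4,5),(5,3),(3,0),(1,3),(3,4),(4,1)]

/-- `F₆`: a path `0-1-2-3-4` plus a vertex `5` adjacent to the internal vertices `1,2,3`. -/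
def F6 : SimpleGraph (Fin 6) := graphOfList 6 [(0,1),(1,2),(2,3),(3,4),(1,5),(2,5),(3,5)]

/-- `F₇`: a path `0-1-2-3-4-5` plus a vertex `6` adjacent to the internal vertices `1,2,3,4`. -/
def F7 : SimpleGraph (Fin 7) :=
  graphOfList 7 [(0,1),(1,2),(2,3),(3,4),(4,5),(1,6),(2,6),(3,6),(4,6)]

/-- `F₈`: a path `0-1-2-3`, vertices `4` adjacent to `0,1`, `5` adjacent to `1,2`,
`6` adjacent to `2,3`, and the path `4-5-6`. -/
def F8 : SimpleGraph (Fin 7) :=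
  graphOfList 7 [(0,1),(1,2),(2,3),(3,6),(6,5),(5,4),(4,0),(4,1),(1,5),(5,2),(2,6)]

/-- `F₉`: vertices `x₁,x₂,x₃ = 0,1,2`, `y₁,y₂,y₃ = 3,4,5`, `z = 6`. -/
def F9 : SimpleGraph (Fin 7) :=
  graphOfList 7 [(0,1),(1,2),(3,4),(4,5),(0,3),(1,3),(1,4),(2,4),(2,5),(1,6),(2,6),(3,6),(4,6)]

/-- `F₈⁻`: the 6-cycle `a b e f c d = 0 1 2 3 4 5` with chords `db, bc, ce`. -/
def F8minus : SimpleGraph (Fin 6) :=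
  graphOfList 6 [(0,1),(1,2),(2,3),(3,4),(4,5),(5,0),(5,1),(1,4),(4,2)]

/-- The gem: the path `0-1-2-3` plus a dominating vertex `4`. -/
def gemGraph : SimpleGraph (Fin 5) :=
  graphOfList 5 [(0,1),(1,2),(2,3),(0,4),(1,4),(2,4),(3,4)]

/-- The diamond `K₄` minus one edge. -/
def diamondGraph : SimpleGraph (Fin 4) := graphOfList 4 [(0,1),(0,2),(0,3),(1,2),(1,3)]

/-- A set `U` is homogeneous in `G` if every vertex outside `U` is adjacent to all of
`U` or to none of `U`. -/
def SimpleGraph.Homogeneous {V : Type*} (G : SimpleGraph V) (U : Set V) : Prop :=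
  ∀ v ∉ U, (∀ u ∈ U, G.Adj v u) ∨ (∀ u ∈ U, ¬ G.Adj v u)

/-- A set of vertices is independent if no two of its vertices are adjacent. -/
def SimpleGraph.IndepSet {V : Type*} (G : SimpleGraph V) (U : Set V) : Prop :=
  ∀ u ∈ U, ∀ w ∈ U, ¬ G.Adj u w

/-- `v` is a cut-vertex of `G`: its removal separates two vertices that were reachable. -/
def SimpleGraph.IsCutVertex {V : Type*} (G : SimpleGraph V) (v : V) : Prop :=
  ∃ (x y : V) (hx : x ≠ v) (hy : y ≠ v), G.Reachable x y ∧
    ¬ (G.induce {u : V | u ≠ v}).Reachable ⟨x, hx⟩ ⟨y, hy⟩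

/-- A block of `G`: a maximal set of vertices inducing a connected subgraph without
a cut-vertex. -/
def SimpleGraph.IsBlock {V : Type*} (G : SimpleGraph V) (B : Set V) : Prop :=
  (G.induce B).Connected ∧ (∀ v, ¬ (G.induce B).IsCutVertex v) ∧
    ∀ C : Set V, B ⊆ C → (G.induce C).Connected → (∀ v, ¬ (G.induce C).IsCutVertex v) → B = C

/-- The graph `G` on `V(H) ∪ {x}` (with `x = none`) in which `x` is adjacent to all
vertices of `H` and `G - x` is the complement of `H`. -/
def auxG {α : Type*} (H : SimpleGraph α) : SimpleGraph (Option α) :=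
  SimpleGraph.fromRel (fun x y => match x, y with
    | some a, some b => ¬ H.Adj a b
    | _, _ => True)


/-! The edges of a graph at a vertex `x` are pairwise adjacent in the Gallai graph exactly when
their far endpoints are non-adjacent, so they induce the complement of `G[N(x)]`. In `auxG H`
the neighbourhood of `x` is all of `V(H)` and `G[N(x)]` is `Hᶜ`. -/

theorem hasInducedCopy_of_embedding {α V : Type*} {H : SimpleGraph α} {G : SimpleGraph V}
    (f : H ↪g G) : HasInducedCopy H G :=
  ⟨f.toEmbedding, fun _ _ => f.map_rel_iff.symm⟩

namespace SimpleGraph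

variable {V : Type*} {G : SimpleGraph V}

theorem gallai_adj_mk_mk_iff {x a b : V} (ha : G.Adj x a) (hb : G.Adj x b) (hab : a ≠ b) :
    G.gallai.Adj ⟨s(x, a), ha⟩ ⟨s(x, b), hb⟩ ↔ ¬ G.Adj a b := by
  refine ⟨?_, fun h => ⟨fun he => hab ?_, x, a, b, rfl, rfl, h⟩⟩
  · rintro ⟨-, p, q, r, hpq, hpr, hqr⟩
    simp only [Sym2.eq_iff] at hpq hpr
    rcases hpq with ⟨rfl, rfl⟩ | ⟨rfl, rfl⟩ <;> rcases hpr with ⟨h₁, rfl⟩ | ⟨rfl, rfl⟩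
    · exact hqr
    · exact (G.irrefl hb).elim
    · exact (G.irrefl (h₁ ▸ ha)).elim
    · exact (hab rfl).elim
  · simpa [ha.ne.symm] using congrArg Subtype.val he

variable (G) in
noncomputable def neighborSetEquivEdgesAt (x : V) :
    G.neighborSet x ≃ {e : G.edgeSet | x ∈ (e : Sym2 V)} :=
  Equiv.ofBijective (fun v => ⟨⟨s(x, v), v.2⟩, Sym2.mem_mk_left x v⟩) <| by
    refine ⟨fun v w h => Subtype.ext ?_, fun ⟨⟨e, he⟩, hx⟩ => ?_⟩
    · exact Sym2.congr_right.mp (congrArg (Subtype.val ∘ Subtype.val) h)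
    · obtain ⟨v, rfl⟩ := Sym2.mem_iff_exists.mp hx
      exact ⟨⟨v, he⟩, rfl⟩

variable (G) in
noncomputable def complInduceNeighborSetIsoGallaiInduce (x : V) :
    (G.induce (G.neighborSet x))ᶜ ≃g G.gallai.induce {e : G.edgeSet | x ∈ (e : Sym2 V)} where
  toEquiv := G.neighborSetEquivEdgesAt x
  map_rel_iff' {v w} := by
    by_cases hvw : v = w
    · subst hvw
      simp
    · exact (gallai_adj_mk_mk_iff v.2 w.2 (Subtype.val_injective.ne hvw)).trans
        (by simp [hvw])

end SimpleGraph

section auxG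

variable {α : Type*} (H : SimpleGraph α)

theorem auxG_adj_none_some (a : α) : (auxG H).Adj none (some a) := by
  simp [auxG]

theorem auxG_adj_some_some {a b : α} :
    (auxG H).Adj (some a) (some b) ↔ a ≠ b ∧ ¬ H.Adj a b := by
  simp only [auxG, fromRel_adj, ne_eq, Option.some.injEq]
  exact and_congr_right fun _ => ⟨fun h => h.elim id fun h' h'' => h' h''.symm, Or.inl⟩

noncomputable def isoComplInduceNeighborSetNone :
    H ≃g ((auxG H).induce ((auxG H).neighborSet none))ᶜ where
  toEquiv := Equiv.ofBijective (fun a => ⟨some a, auxG_adj_none_some H a⟩) <| by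
    refine ⟨fun a b h => Option.some.inj (congrArg Subtype.val h), fun ⟨v, hv⟩ => ?_⟩
    cases v with
    | none => exact ((auxG H).irrefl hv).elim
    | some a => exact ⟨a, rfl⟩
  map_rel_iff' {a b} := by
    change ((auxG H).induce _)ᶜ.Adj ⟨some a, _⟩ ⟨some b, _⟩ ↔ H.Adj a b
    simp only [compl_adj, comap_adj, Function.Embedding.subtype_apply, ne_eq, Subtype.ext_iff,
      Option.some.injEq, auxG_adj_some_some]
    exact ⟨fun h => by tauto, fun h => ⟨h.ne, fun h' => h'.2 h⟩⟩

end auxG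

/-- Every graph `H` is isomorphic to an induced subgraph of some Gallai graph: the
subgraph of `Γ(auxG H)` induced by the edges incident with `x = none` is isomorphic
to `H`; in particular `Γ(auxG H)` contains an induced copy of `H`. -/
theorem stmt_0 {α : Type*} (H : SimpleGraph α) :
    Nonempty (((auxG H).gallai.induce
        {e : (auxG H).edgeSet | (none : Option α) ∈ (e : Sym2 (Option α))}) ≃g H) ∧
    HasInducedCopy H (auxG H).gallai := by
  let e := (isoComplInduceNeighborSetNone H).trans
    ((auxG H).complInduceNeighborSetIsoGallaiInduce none)
  exact ⟨⟨e.symm⟩, hasInducedCopy_of_embedding ((Embedding.induce _).comp (Iso.toEmbedding e))⟩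
end

section
/- If G is a graph without isolated vertices, then the Gallai graph Γ(G) is connected if and only if every non-trivial homogeneous set in G is an independent set. -/
open SimpleGraph

/-!
Call a set `T` of unordered pairs Gallai-closed if `s(a, b) ∈ T → s(a, c) ∈ T` along every
induced path `b - a - c` of `G`; on the edges of `G` these are exactly the unions of
components of `Γ(G)`. The pairs inside a homogeneous set `U` form a Gallai-closed set, so when
`Γ(G)` is connected no edge lies inside a proper homogeneous set.

Conversely let `T` be Gallai-closed. If a triangle `v z z'` had `vz, vz' ∈ T` but `zz' ∉ T`,
then the component of `z` in the graph on the `T`-neighbours of `v` whose edges are the edges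
of `G` outside `T` would be a homogeneous set avoiding `v` and containing the edge `zz'`.
Applied to `T` and to its complement, this shows that at every vertex the edges lie all in `T`
or all outside it. As `G` is connected (its components are homogeneous), `T` contains all
edges or none.
-/

namespace SimpleGraph

variable {W V : Type*}

theorem Reachable.mem_of_forall_adj_mem {H : SimpleGraph W} {T : Set W}
    (hT : ∀ ⦃a b⦄, H.Adj a b → a ∈ T → b ∈ T) {a b : W} (hab : H.Reachable a b)
    (ha : a ∈ T) : b ∈ T := by
  obtain ⟨p⟩ := hab
  induction p with
  | nil => exact ha
  | cons hadj _ ih => exact ih (hT hadj ha)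

theorem Reachable.iff_of_forall_adj {H : SimpleGraph W} {P : W → Prop} {z x : W}
    (hP : ∀ ⦃a b⦄, H.Reachable z a → H.Adj a b → (P a ↔ P b)) (hx : H.Reachable z x) :
    P z ↔ P x :=
  (hx.mem_of_forall_adj_mem (T := {t | H.Reachable z t ∧ (P z ↔ P t)})
    (fun _ _ hab ha => ⟨ha.1.trans hab.reachable, ha.2.trans (hP ha.1 hab)⟩)
    ⟨Reachable.refl z, Iff.rfl⟩).2

variable {G : SimpleGraph V} {T : Set (Sym2 V)}

def IsGallaiClosed (G : SimpleGraph V) (T : Set (Sym2 V)) : Prop :=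
  ∀ ⦃a b c⦄, G.Adj a b → G.Adj a c → b ≠ c → ¬ G.Adj b c → s(a, b) ∈ T → s(a, c) ∈ T

theorem IsGallaiClosed.compl (hT : IsGallaiClosed G T) : IsGallaiClosed G Tᶜ :=
  fun _ _ _ hab hac hbc hnbc habT hacT =>
    habT (hT hac hab hbc.symm (fun h => hnbc h.symm) hacT)

theorem gallai_adj_mk {a b c : V} (hab : G.Adj a b) (hac : G.Adj a c) (hbc : b ≠ c)
    (hnbc : ¬ G.Adj b c) :
    G.gallai.Adj ⟨s(a, b), G.mem_edgeSet.mpr hab⟩ ⟨s(a, c), G.mem_edgeSet.mpr hac⟩ := by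
  refine ⟨fun h => hbc ?_, a, b, c, rfl, rfl, hnbc⟩
  exact Sym2.congr_right.mp (congrArg Subtype.val h)

theorem IsGallaiClosed.mem_of_gallai_adj (hT : IsGallaiClosed G T) {e f : G.edgeSet}
    (hef : G.gallai.Adj e f) (he : (e : Sym2 V) ∈ T) : (f : Sym2 V) ∈ T := by
  rcases e with ⟨e, heG⟩
  rcases f with ⟨f, hfG⟩
  obtain ⟨hne, a, b, c, rfl : e = s(a, b), rfl : f = s(a, c), hnbc⟩ := hef
  refine hT (G.mem_edgeSet.mp heG) (G.mem_edgeSet.mp hfG) ?_ hnbc he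
  rintro rfl
  exact hne rfl

theorem gallai_preconnected_iff :
    G.gallai.Preconnected ↔ ∀ T : Set (Sym2 V), IsGallaiClosed G T →
      ∀ ⦃x y p q : V⦄, G.Adj x y → s(x, y) ∈ T → G.Adj p q → s(p, q) ∈ T := by
  constructor
  · intro hpre T hT x y p q hxy hxyT hpq
    exact (hpre ⟨s(x, y), hxy⟩ ⟨s(p, q), hpq⟩).mem_of_forall_adj_mem
      (T := {e : G.edgeSet | (e : Sym2 V) ∈ T}) (fun _ _ => hT.mem_of_gallai_adj) hxyT
  · intro h e f
    let R : Set (Sym2 V) := {t | ∀ ht : t ∈ G.edgeSet, G.gallai.Reachable e ⟨t, ht⟩}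
    have hR : IsGallaiClosed G R := fun a b c hab hac hbc hnbc habR _ =>
      (habR hab).trans (gallai_adj_mk hab hac hbc hnbc).reachable
    rcases e with ⟨e, he⟩
    rcases f with ⟨f, hf⟩
    induction e using Sym2.ind with | h x y => ?_
    induction f using Sym2.ind with | h p q => ?_
    exact h R hR he (fun _ => Reachable.refl _) hf hf

theorem Homogeneous.isGallaiClosed_sym2 {U : Set V} (hU : G.Homogeneous U) :
    IsGallaiClosed G U.sym2 := by
  intro a b c hab hac _ hnbc ⟨ha, hb⟩
  refine ⟨ha, by_contra fun hc => ?_⟩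
  rcases hU c hc with hall | hnone
  · exact hnbc (hall b hb).symm
  · exact hnone a ha hac.symm

theorem preconnected_of_forall_homogeneous (hiso : ∀ v : V, ∃ w : V, G.Adj v w)
    (hhom : ∀ U : Set V, G.Homogeneous U → U.Nontrivial → U ≠ Set.univ → G.IndepSet U) :
    G.Preconnected := by
  intro x y
  by_contra hxy
  obtain ⟨x', hxx'⟩ := hiso x
  have hC : G.Homogeneous {z | G.Reachable x z} :=
    fun v hv => Or.inr fun u hu huv => hv (hu.trans huv.symm.reachable)
  exact hhom _ hC ⟨x, Reachable.refl x, x', hxx'.reachable, hxx'.ne⟩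
    (fun h => hxy (Set.eq_univ_iff_forall.mp h y))
    x (Reachable.refl x) x' hxx'.reachable hxx'

def linkGraph (G : SimpleGraph V) (T : Set (Sym2 V)) (v : V) : SimpleGraph V where
  Adj x y := (G.Adj v x ∧ s(v, x) ∈ T) ∧ (G.Adj v y ∧ s(v, y) ∈ T) ∧ G.Adj x y ∧ s(x, y) ∉ T
  symm := ⟨fun _ _ ⟨hx, hy, hxy, hxyT⟩ => ⟨hy, hx, hxy.symm, by rwa [Sym2.eq_swap]⟩⟩
  loopless := ⟨fun _ h => G.irrefl h.2.2.1⟩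

theorem adj_and_mem_of_reachable_linkGraph {v z x : V} (hx : (G.linkGraph T v).Reachable z x)
    (hz : G.Adj v z ∧ s(v, z) ∈ T) : G.Adj v x ∧ s(v, x) ∈ T :=
  hx.mem_of_forall_adj_mem (T := {y | G.Adj v y ∧ s(v, y) ∈ T})
    (fun _ _ (h : (G.linkGraph T v).Adj _ _) _ => h.2.1) hz

theorem IsGallaiClosed.adj_of_linkGraph_adj (hT : IsGallaiClosed G T) {v u a b : V}
    (hab : (G.linkGraph T v).Adj a b) (hua : G.Adj u a) (huv : u ≠ v)
    (hvu : G.Adj v u → s(v, u) ∈ T) (hau : ¬ (G.linkGraph T v).Adj a u) (hub : u ≠ b) :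
    G.Adj u b := by
  by_contra hnub
  obtain ⟨⟨hva, hvaT⟩, -, hab, habT⟩ := hab
  have hauT : s(a, u) ∈ T := by
    by_cases hvu' : G.Adj v u
    · by_contra h
      exact hau ⟨⟨hva, hvaT⟩, ⟨hvu', hvu hvu'⟩, hua.symm, h⟩
    · exact hT hva.symm hua.symm huv.symm hvu' (by rwa [Sym2.eq_swap])
  exact habT (hT hua.symm hab hub hnub hauT)

theorem IsGallaiClosed.homogeneous_linkGraph (hT : IsGallaiClosed G T) {v z : V}
    (hz : G.Adj v z ∧ s(v, z) ∈ T) : G.Homogeneous {x | (G.linkGraph T v).Reachable z x} := by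
  intro u hu
  by_cases huv : u = v
  · subst huv
    exact Or.inl fun x hx => (adj_and_mem_of_reachable_linkGraph hx hz).1
  by_cases hvu : G.Adj v u ∧ s(v, u) ∉ T
  · refine Or.inl fun x hx => by_contra fun hux => hvu.2 ?_
    obtain ⟨hvx, hvxT⟩ := adj_and_mem_of_reachable_linkGraph hx hz
    exact hT hvx hvu.1 (by rintro rfl; exact hu hx) (fun h => hux h.symm) hvxT
  rw [not_and_not_right] at hvu
  have hstep : ∀ ⦃a b⦄, (G.linkGraph T v).Reachable z a → (G.linkGraph T v).Adj a b →
      (G.Adj u a ↔ G.Adj u b) := by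
    intro a b ha hab
    have hb := ha.trans hab.reachable
    exact ⟨fun hua => hT.adj_of_linkGraph_adj hab hua huv hvu
        (fun h => hu (ha.trans h.reachable)) (by rintro rfl; exact hu hb),
      fun hub => hT.adj_of_linkGraph_adj hab.symm hub huv hvu
        (fun h => hu (hb.trans h.reachable)) (by rintro rfl; exact hu ha)⟩
  by_cases huz : G.Adj u z
  · exact Or.inl fun x hx => (Reachable.iff_of_forall_adj hstep hx).mp huz
  · exact Or.inr fun x hx h => huz ((Reachable.iff_of_forall_adj hstep hx).mpr h)

theorem IsGallaiClosed.mem_of_triangle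
    (hhom : ∀ U : Set V, G.Homogeneous U → U.Nontrivial → U ≠ Set.univ → G.IndepSet U)
    (hT : IsGallaiClosed G T) {v z z' : V} (hvz : G.Adj v z) (hvz' : G.Adj v z')
    (hzz' : G.Adj z z') (hvzT : s(v, z) ∈ T) (hvz'T : s(v, z') ∈ T) : s(z, z') ∈ T := by
  by_contra hzz'T
  have hJ : (G.linkGraph T v).Adj z z' := ⟨⟨hvz, hvzT⟩, ⟨hvz', hvz'T⟩, hzz', hzz'T⟩
  have hvS : ¬ (G.linkGraph T v).Reachable z v :=
    fun h => G.irrefl (adj_and_mem_of_reachable_linkGraph h ⟨hvz, hvzT⟩).1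
  exact hhom _ (hT.homogeneous_linkGraph ⟨hvz, hvzT⟩)
    ⟨z, Reachable.refl z, z', hJ.reachable, hzz'.ne⟩
    (fun h => hvS (Set.eq_univ_iff_forall.mp h v))
    z (Reachable.refl z) z' hJ.reachable hzz'

theorem IsGallaiClosed.mem_of_adj_of_adj
    (hhom : ∀ U : Set V, G.Homogeneous U → U.Nontrivial → U ≠ Set.univ → G.IndepSet U)
    (hT : IsGallaiClosed G T) {v a b : V} (hva : G.Adj v a) (hvb : G.Adj v b)
    (hvaT : s(v, a) ∈ T) : s(v, b) ∈ T := by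
  rcases eq_or_ne a b with rfl | hab
  · exact hvaT
  by_cases hadj : G.Adj a b
  swap
  · exact hT hva hvb hab hadj hvaT
  by_contra hvbT
  by_cases habT : s(a, b) ∈ T
  · exact hvbT (hT.mem_of_triangle hhom hva.symm hadj hvb (by rwa [Sym2.eq_swap]) habT)
  · refine hT.compl.mem_of_triangle hhom hvb.symm hadj.symm hva ?_ ?_ hvaT
    · rwa [Sym2.eq_swap]
    · rwa [Sym2.eq_swap]

theorem gallai_preconnected_of_forall_homogeneous (hiso : ∀ v : V, ∃ w : V, G.Adj v w)
    (hhom : ∀ U : Set V, G.Homogeneous U → U.Nontrivial → U ≠ Set.univ → G.IndepSet U) :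
    G.gallai.Preconnected := by
  refine gallai_preconnected_iff.mpr fun T hT x y p q hxy hxyT hpq => ?_
  let Star : Set V := {t | ∀ r, G.Adj t r → s(t, r) ∈ T}
  have hStar : ∀ ⦃a b⦄, G.Adj a b → a ∈ Star → b ∈ Star := fun a b hab ha r hbr =>
    hT.mem_of_adj_of_adj hhom hab.symm hbr (by rw [Sym2.eq_swap]; exact ha b hab)
  have hx : x ∈ Star := fun r hxr => hT.mem_of_adj_of_adj hhom hxy hxr hxyT
  exact (preconnected_of_forall_homogeneous hiso hhom x p).mem_of_forall_adj_mem hStar hx q hpq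

end SimpleGraph

theorem stmt_4_general {V : Type*} [Nonempty V] (G : SimpleGraph V)
    (hiso : ∀ v : V, ∃ w : V, G.Adj v w) :
    G.gallai.Connected ↔
      ∀ U : Set V, G.Homogeneous U → U.Nontrivial → U ≠ Set.univ → G.IndepSet U := by
  constructor
  · intro hconn U hU _ hne u hu w hw huw
    obtain ⟨v, hv⟩ := (Set.ne_univ_iff_exists_notMem U).mp hne
    obtain ⟨v', hvv'⟩ := hiso v
    exact hv (gallai_preconnected_iff.mp hconn.preconnected _ hU.isGallaiClosed_sym2
      huw ⟨hu, hw⟩ hvv').1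
  · intro hhom
    obtain ⟨v⟩ := ‹Nonempty V›
    obtain ⟨w, hvw⟩ := hiso v
    have : Nonempty G.edgeSet := ⟨⟨s(v, w), hvw⟩⟩
    exact ⟨gallai_preconnected_of_forall_homogeneous hiso hhom⟩

/-- For a graph `G` without isolated vertices, `Γ(G)` is connected iff every
non-trivial homogeneous set in `G` is independent. -/
theorem stmt_4 {V : Type*} [Fintype V] [Nonempty V] (G : SimpleGraph V)
    (hiso : ∀ v : V, ∃ w : V, G.Adj v w) :
    G.gallai.Connected ↔
      ∀ U : Set V, G.Homogeneous U → U.Nontrivial → U ≠ Set.univ → G.IndepSet U :=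
  stmt_4_general G hiso
end
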